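/- The Krawtchouk polynomials are eigenfunctions of ∇̃_n ∘ ∇_n: for every r ∈ {0,...,n}, (∇̃_n ∘ ∇_n)φ_r = (r(n-r+1)/(n²t(1-t)))·φ_r. -/

import Mathlib

/-!
Write `a = 1 + (1 - t) X`, `b = 1 - t X` and `P k = a ^ k * b ^ (n - k)` for the generating
polynomial of the `φ r k`, so that `φ r k` is `r! / (1 - t) ^ r` times the `X ^ r`-coefficient of
`P k`. On this family both difference operators act as differential operators in `X`:
`∇ P = X P - X² P' / n` and `∇̃ P = P' / (n t (1 - t))`, both coming from `a - b = X` and Euler's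
relation `n P = a ∂ₐP + b ∂_bP`. Hence `n² t (1 - t) ∇̃∇ P = n X P' - X² P''`, which multiplies
the `X ^ r`-coefficient by `r (n - r + 1)`.
-/

open Finset Polynomial

noncomputable section Operators

variable {M N : Type*} [AddCommGroup M] [Module ℝ M] [AddCommGroup N] [Module ℝ N]

def nabla (n : ℕ) (f : ℕ → M) (k : ℕ) : M :=
  ((k : ℝ) / n) • (f k - f (k - 1)) + (((n : ℝ) - k) / n) • (f (k + 1) - f k)

def nablaTilde (n : ℕ) (t : ℝ) (f : ℕ → M) (k : ℕ) : M :=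
  ((k : ℝ) / n * ((1 - t) / t)) • f (k - 1) - (((n : ℝ) - 2 * k) / n) • f k
    - (((n : ℝ) - k) / n * (t / (1 - t))) • f (k + 1)

variable (L : M →ₗ[ℝ] N) {n : ℕ} {F : ℕ → M} {f : ℕ → N}

-- Only values on `{0, …, n}` matter: at `k = n` the value at `n + 1` has coefficient `(n - n) / n = 0`.
theorem map_nabla_of_eqOn (h : ∀ j ≤ n, L (F j) = f j) {k : ℕ} (hk : k ≤ n) :
    L (nabla n F k) = nabla n f k := by
  rcases hk.lt_or_eq with hk | rfl
  · simp [nabla, h k hk.le, h (k - 1) (by omega), h (k + 1) hk]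
  · simp [nabla, h k le_rfl, h (k - 1) (by omega)]

theorem map_nablaTilde_of_eqOn (t : ℝ) (h : ∀ j ≤ n, L (F j) = f j) {k : ℕ} (hk : k ≤ n) :
    L (nablaTilde n t F k) = nablaTilde n t f k := by
  rcases hk.lt_or_eq with hk | rfl
  · simp [nablaTilde, h k hk.le, h (k - 1) (by omega), h (k + 1) hk]
  · simp [nablaTilde, h k le_rfl, h (k - 1) (by omega)]

end Operators

section PowMulPow

variable {R : Type*} [CommRing R] (x y : R) {n j : ℕ}

theorem natCast_mul_pow_eq_mul_pow_pred_mul (m : ℕ) : (m : R) * x ^ m = m * x ^ (m - 1) * x := by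
  rcases m with _ | m
  · simp
  · simp [mul_assoc, pow_succ]

theorem natCast_mul_pow_mul_pow_pred (hj : j ≤ n) :
    (j : R) * (x ^ (j - 1) * y ^ (n - (j - 1))) = j * x ^ (j - 1) * y ^ (n - j) * y := by
  rcases j with _ | j
  · simp
  · rw [show n - (j + 1 - 1) = n - (j + 1) + 1 by omega]
    ring

theorem natCast_sub_mul_pow_succ_mul_pow :
    ((n - j : ℕ) : R) * (x ^ (j + 1) * y ^ (n - (j + 1)))
      = (n - j : ℕ) * x ^ j * y ^ (n - j - 1) * x := by
  rw [Nat.sub_add_eq]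
  ring

end PowMulPow

section Coeff

variable {R : Type*} [CommRing R]

theorem coeff_X_mul_derivative {S : Type*} [Semiring S] (p : S[X]) (r : ℕ) :
    (X * derivative p).coeff r = r * p.coeff r := by
  rcases r with _ | r
  · simp
  · rw [coeff_X_mul, coeff_derivative, (Nat.cast_commute _ _).eq]
    push_cast
    rfl

theorem coeff_X_sq_mul_derivative_derivative (p : R[X]) (r : ℕ) :
    (X ^ 2 * derivative (derivative p)).coeff r = r * (r - 1) * p.coeff r := by
  have h : X ^ 2 * derivative (derivative p)
      = X * derivative (X * derivative p) - X * derivative p := by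
    rw [derivative_mul, derivative_X]
    ring
  simp only [h, coeff_sub, coeff_X_mul_derivative]
  ring

theorem coeff_eq_of_forall_eval_eq_sum [IsDomain R] [Infinite R] {m : ℕ} {f : ℕ → R} {p : R[X]}
    (h : ∀ w, ∑ i ∈ range m, f i * w ^ i = p.eval w) {i : ℕ} (hi : i < m) : p.coeff i = f i := by
  have hp : p = ∑ i ∈ range m, C (f i) * X ^ i :=
    Polynomial.funext fun w => by simp [eval_finsetSum, ← h w]
  simp [hp, coeff_C_mul, coeff_X_pow, hi]

end Coeff

section Krawtchouk

noncomputable def krawtchoukGen (n : ℕ) (t : ℝ) (k : ℕ) : ℝ[X] :=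
  (1 + C (1 - t) * X) ^ k * (1 - C t * X) ^ (n - k)

variable {n : ℕ} {t : ℝ}

theorem eval_krawtchoukGen (w : ℝ) (k : ℕ) :
    (krawtchoukGen n t k).eval w = (1 + (1 - t) * w) ^ k * (1 - t * w) ^ (n - k) := by
  simp [krawtchoukGen]

theorem eval_derivative_krawtchoukGen (w : ℝ) (k : ℕ) :
    (derivative (krawtchoukGen n t k)).eval w
      = (1 - t) * (k * (1 + (1 - t) * w) ^ (k - 1) * (1 - t * w) ^ (n - k))
        - t * ((n - k : ℕ) * (1 + (1 - t) * w) ^ k * (1 - t * w) ^ (n - k - 1)) := by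
  simp only [krawtchoukGen, derivative_mul, derivative_pow, derivative_add, derivative_sub,
    derivative_one, derivative_C, derivative_X, eval_add, eval_sub, eval_mul, eval_pow, eval_one,
    eval_zero, eval_C, eval_X]
  ring

/-- `A` and `B` are the partial derivatives `∂ₐ(aʲ bⁿ⁻ʲ)` and `∂_b(aʲ bⁿ⁻ʲ)` at
`a = 1 + (1 - t) w`, `b = 1 - t w`. -/
theorem exists_krawtchoukGen_relations {j : ℕ} (hj : j ≤ n) (w : ℝ) : ∃ A B : ℝ,
    j * (krawtchoukGen n t (j - 1)).eval w = A * (1 - t * w)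
      ∧ j * (krawtchoukGen n t j).eval w = A * (1 + (1 - t) * w)
      ∧ (n - j) * (krawtchoukGen n t (j + 1)).eval w = B * (1 + (1 - t) * w)
      ∧ (n - j) * (krawtchoukGen n t j).eval w = B * (1 - t * w)
      ∧ (derivative (krawtchoukGen n t j)).eval w = (1 - t) * A - t * B := by
  refine ⟨j * (1 + (1 - t) * w) ^ (j - 1) * (1 - t * w) ^ (n - j),
    (n - j : ℕ) * (1 + (1 - t) * w) ^ j * (1 - t * w) ^ (n - j - 1), ?_, ?_, ?_, ?_, ?_⟩
  · rw [eval_krawtchoukGen, natCast_mul_pow_mul_pow_pred _ _ hj]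
  · rw [eval_krawtchoukGen, ← mul_assoc, natCast_mul_pow_eq_mul_pow_pred_mul]
    ring
  · rw [eval_krawtchoukGen, ← Nat.cast_sub hj, natCast_sub_mul_pow_succ_mul_pow]
  · rw [eval_krawtchoukGen, ← Nat.cast_sub hj, mul_left_comm, natCast_mul_pow_eq_mul_pow_pred_mul]
    ring
  · rw [eval_derivative_krawtchoukGen]

theorem nabla_krawtchoukGen (hn : n ≠ 0) {j : ℕ} (hj : j ≤ n) :
    nabla n (krawtchoukGen n t) j
      = X * krawtchoukGen n t j - C (n : ℝ)⁻¹ * X ^ 2 * derivative (krawtchoukGen n t j) := by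
  refine Polynomial.funext fun w => ?_
  obtain ⟨A, B, h₁, h₂, h₃, h₄, hD⟩ := exists_krawtchoukGen_relations (t := t) hj w
  have hn' : (n : ℝ) * (n : ℝ)⁻¹ = 1 := mul_inv_cancel₀ (by exact_mod_cast hn)
  simp only [nabla, eval_add, eval_sub, eval_smul, eval_mul, eval_X, eval_C, eval_pow, smul_eq_mul]
  linear_combination (n : ℝ)⁻¹ * (h₂ - h₁ + h₃ - h₄) - w * (n : ℝ)⁻¹ * (h₂ + h₄)
    + w * (krawtchoukGen n t j).eval w * hn' + (n : ℝ)⁻¹ * w ^ 2 * hD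

theorem nablaTilde_krawtchoukGen (ht₀ : t ≠ 0) (ht₁ : 1 - t ≠ 0) {j : ℕ} (hj : j ≤ n) :
    nablaTilde n t (krawtchoukGen n t) j
      = C ((n * t * (1 - t))⁻¹) * derivative (krawtchoukGen n t j) := by
  refine Polynomial.funext fun w => ?_
  obtain ⟨A, B, h₁, h₂, h₃, h₄, hD⟩ := exists_krawtchoukGen_relations (t := t) hj w
  have hu : t * t⁻¹ = 1 := mul_inv_cancel₀ ht₀
  have hv : (1 - t) * (1 - t)⁻¹ = 1 := mul_inv_cancel₀ ht₁
  simp only [nablaTilde, eval_sub, eval_smul, eval_mul, eval_C, smul_eq_mul, mul_inv]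
  -- `(1 - t) / t * b + a = 1 / t` and `b + t / (1 - t) * a = 1 / (1 - t)`
  linear_combination (n : ℝ)⁻¹ * ((1 - t) * t⁻¹ * h₁ - h₄ + h₂ - t * (1 - t)⁻¹ * h₃)
    + (n : ℝ)⁻¹ * (B * (1 - t * w) - A * t⁻¹) * hv
    + (n : ℝ)⁻¹ * (B * (1 - t)⁻¹ - A * (1 + (1 - t) * w)) * hu - (n : ℝ)⁻¹ * t⁻¹ * (1 - t)⁻¹ * hD

theorem nablaTilde_nabla_krawtchoukGen (hn : n ≠ 0) (ht₀ : t ≠ 0) (ht₁ : 1 - t ≠ 0) {k : ℕ}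
    (hk : k ≤ n) :
    nablaTilde n t (nabla n (krawtchoukGen n t)) k
      = C ((n * t * (1 - t))⁻¹) * (X * derivative (krawtchoukGen n t k)
        - C (n : ℝ)⁻¹ * X ^ 2 * derivative (derivative (krawtchoukGen n t k))) := by
  let E : ℝ[X] →ₗ[ℝ] ℝ[X] :=
    LinearMap.mulLeft ℝ X - LinearMap.mulLeft ℝ (C (n : ℝ)⁻¹ * X ^ 2) ∘ₗ derivative
  have hE : ∀ j ≤ n, E (krawtchoukGen n t j) = nabla n (krawtchoukGen n t) j :=
    fun j hj => (nabla_krawtchoukGen hn hj).symm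
  rw [← map_nablaTilde_of_eqOn E t hE hk, nablaTilde_krawtchoukGen ht₀ ht₁ hk]
  simp only [E, LinearMap.sub_apply, LinearMap.mulLeft_apply, LinearMap.comp_apply, derivative_C_mul]
  ring

theorem coeff_nablaTilde_nabla_krawtchoukGen (hn : n ≠ 0) (ht₀ : t ≠ 0) (ht₁ : 1 - t ≠ 0)
    {k : ℕ} (hk : k ≤ n) (r : ℕ) :
    (nablaTilde n t (nabla n (krawtchoukGen n t)) k).coeff r
      = r * (n - r + 1) / (n ^ 2 * t * (1 - t)) * (krawtchoukGen n t k).coeff r := by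
  simp only [nablaTilde_nabla_krawtchoukGen hn ht₀ ht₁ hk, coeff_C_mul, coeff_sub, mul_assoc,
    coeff_X_mul_derivative, coeff_X_sq_mul_derivative_derivative]
  have hn' : (n : ℝ) ≠ 0 := by exact_mod_cast hn
  field_simp
  ring

end Krawtchouk

/-- the Krawtchouk polynomials are eigenfunctions of `∇̃_n ∘ ∇_n`:
`(∇̃_n ∘ ∇_n) φ_r = (r(n-r+1)/(n²t(1-t)))·φ_r` (boundary values of `φ_r` outside
`{0,...,n}` appear only with vanishing coefficients). -/
theorem stmt14 (n : ℕ) (hn : 1 ≤ n) (t : ℝ) (ht : t ∈ Set.Ioo (0 : ℝ) 1)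
    (φ : ℕ → ℕ → ℝ)
    (hφ : ∀ k ≤ n, ∀ w : ℝ,
      ∑ r ∈ range (n + 1), (1 - t) ^ r / (Nat.factorial r : ℝ) * φ r k * w ^ r
        = (1 + (1 - t) * w) ^ k * (1 - t * w) ^ (n - k))
    (r : ℕ) (hr : r ≤ n) (k : ℕ) (hk : k ≤ n)
    (g : ℕ → ℝ)
    (hg : ∀ j, g j = (j : ℝ) / n * (φ r j - φ r (j - 1))
        + ((n : ℝ) - j) / n * (φ r (j + 1) - φ r j)) :
    (k : ℝ) / n * ((1 - t) / t) * g (k - 1) - ((n : ℝ) - 2 * k) / n * g k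
        - ((n : ℝ) - k) / n * (t / (1 - t)) * g (k + 1)
      = (r : ℝ) * ((n : ℝ) - r + 1) / ((n : ℝ) ^ 2 * t * (1 - t)) * φ r k := by
  have ht₀ : t ≠ 0 := ht.1.ne'
  have ht₁ : 1 - t ≠ 0 := sub_ne_zero.mpr ht.2.ne'
  have hc : (1 - t) ^ r / (r.factorial : ℝ) ≠ 0 := by positivity
  let L : ℝ[X] →ₗ[ℝ] ℝ := ((1 - t) ^ r / (r.factorial : ℝ))⁻¹ • lcoeff ℝ r
  have hL : ∀ j ≤ n, L (krawtchoukGen n t j) = φ r j := by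
    intro j hj
    have h := coeff_eq_of_forall_eval_eq_sum
      (fun w => by rw [eval_krawtchoukGen]; exact hφ j hj w) (Nat.lt_succ_of_le hr)
    simp only [L, LinearMap.smul_apply, lcoeff_apply, smul_eq_mul, h, inv_mul_cancel_left₀ hc]
  have hg' : g = nabla n (φ r) := funext fun j => by simp [hg, nabla]
  calc _ = nablaTilde n t (nabla n (φ r)) k := by simp [hg', nablaTilde]
    _ = L (nablaTilde n t (nabla n (krawtchoukGen n t)) k) :=
      (map_nablaTilde_of_eqOn L t (fun j hj => map_nabla_of_eqOn L hL hj) hk).symm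
    _ = _ := by
      simp only [L, LinearMap.smul_apply, lcoeff_apply, smul_eq_mul,
        coeff_nablaTilde_nabla_krawtchoukGen (by omega) ht₀ ht₁ hk, ← hL k hk]
      ring
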